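/- Let I₁, ..., I_n be N-proper ideals of R such that mAss_R(N/(I₁⋯I_n)N) = ⋃_{i=1}^n mAss_R(N/I_i N), and suppose the I_i-symbolic topology on N is equivalent to the I_i-adic topology on N for each i. Then the (I₁⋯I_n)-symbolic topology on N is equivalent to the (I₁⋯I_n)-adic topology on N, and likewise for I₁ ∩ ⋯ ∩ I_n. -/

import Mathlib

open Ideal

/-- The set of minimal associated primes of an `R`-module `M`. -/
def mAss (R : Type*) [CommRing R] (M : Type*) [AddCommGroup M] [Module R M] : Set (Ideal R) :=
  {p | Minimal (· ∈ associatedPrimes R M) p}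

/-- The `n`-th symbolic power of `I` with respect to `N`:
elements `x ∈ N` with `s • x ∈ I ^ n • N` for some `s` outside every minimal prime of
`Ass_R (N / I N)`. -/
def symbPow (R : Type*) [CommRing R] (I : Ideal R) (N : Type*) [AddCommGroup N] [Module R N]
    (n : ℕ) : Set N :=
  {x | ∃ s : R, (∀ p ∈ mAss R (N ⧸ (I • ⊤ : Submodule R N)), s ∉ p) ∧
    s • x ∈ (I ^ n • ⊤ : Submodule R N)}

/-- The `I`-symbolic topology on `N` is equivalent to the `I`-adic topology on `N`. -/
def symbEquivAdic (R : Type*) [CommRing R] (I : Ideal R) (N : Type*) [AddCommGroup N]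
    [Module R N] : Prop :=
  ∀ n : ℕ, ∃ m : ℕ, symbPow R I N m ⊆ (I ^ n • ⊤ : Submodule R N)

/-
The `I`-symbolic powers of `N` see `I` only through its powers and through `mAss(N/IN)`, the
minimal primes of `Supp N ∩ V(I)`; so equivalence of the symbolic and adic topologies is a
property of `√I`. As `√(I₁ ⋯ Iₙ) = √(I₁ ∩ ⋯ ∩ Iₙ)`, it suffices to treat the product. There the
hypothesis on minimal associated primes puts a high `(I₁ ⋯ Iₙ)`-symbolic power inside a high
`Iᵢ`-symbolic power for every `i`, hence inside `⋂ᵢ Iᵢʳ N`, and by Artin–Rees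
`⋂ᵢ Iᵢʳ N ⊆ (I₁ ⋯ Iₙ)ⁿ N` once `r` is large.
-/

section MinimalAssociatedPrimes

variable {R : Type*} [CommRing R] [IsNoetherianRing R]

lemma mAss_eq_minimalPrimes_annihilator (M : Type*) [AddCommGroup M] [Module R M]
    [Module.Finite R M] : mAss R M = (Module.annihilator R M).minimalPrimes := by
  have hsub := Module.associatedPrimes.minimalPrimes_annihilator_subset_associatedPrimes R M
  have hann : ∀ p ∈ associatedPrimes R M, Module.annihilator R M ≤ p := fun p hp =>
    Submodule.annihilator_top (R := R) (M := M) ▸ IsAssociatedPrime.annihilator_le hp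
  ext p
  constructor
  · rintro ⟨hp, hmin⟩
    have := hp.isPrime
    obtain ⟨q, hq, hqp⟩ := Ideal.exists_minimalPrimes_le (hann p hp)
    exact le_antisymm (hmin (hsub hq) hqp) hqp ▸ hq
  · intro hp
    exact ⟨hsub hp, fun q hq hqp => hp.2 ⟨hq.isPrime, hann q hq⟩ hqp⟩

lemma mAss_eq_of_support_eq {M M' : Type*} [AddCommGroup M] [Module R M] [Module.Finite R M]
    [AddCommGroup M'] [Module R M'] [Module.Finite R M']
    (h : Module.support R M = Module.support R M') : mAss R M = mAss R M' := by
  rw [Module.support_eq_zeroLocus, Module.support_eq_zeroLocus,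
    PrimeSpectrum.zeroLocus_eq_iff] at h
  rw [mAss_eq_minimalPrimes_annihilator, mAss_eq_minimalPrimes_annihilator,
    ← Ideal.radical_minimalPrimes, h, Ideal.radical_minimalPrimes]

lemma mAss_quotient_eq_of_radical_eq (N : Type*) [AddCommGroup N] [Module R N]
    [Module.Finite R N] {I J : Ideal R} (h : I.radical = J.radical) :
    mAss R (N ⧸ (I • ⊤ : Submodule R N)) = mAss R (N ⧸ (J • ⊤ : Submodule R N)) :=
  mAss_eq_of_support_eq <| by
    rw [Module.support_quotient, Module.support_quotient, PrimeSpectrum.zeroLocus_eq_iff.2 h]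

end MinimalAssociatedPrimes

lemma Ideal.radical_prod_eq_radical_inf {R ι : Type*} [CommRing R] (s : Finset ι)
    (I : ι → Ideal R) : (∏ i ∈ s, I i).radical = (s.inf I).radical := by
  refine le_antisymm (radical_mono prod_le_inf) ?_
  rw [radical_le_radical_iff, radical_eq_sInf]
  exact le_sInf fun p hp => hp.2.inf_le'.2 (hp.2.prod_le.1 hp.1)

/-- **Artin–Rees**, for finitely many ideals at once. -/
lemma exists_iInf_pow_smul_top_le_prod_pow_smul_top {R : Type*} [CommRing R]
    [IsNoetherianRing R] (N : Type*) [AddCommGroup N] [Module R N] [Module.Finite R N]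
    {ι : Type*} (I : ι → Ideal R) (s : Finset ι) (n : ℕ) :
    ∃ r : ℕ, ⨅ i ∈ s, (I i ^ r • ⊤ : Submodule R N) ≤ (∏ i ∈ s, I i) ^ n • ⊤ := by
  classical
  induction s using Finset.induction_on with
  | empty => exact ⟨0, by simp [Ideal.one_eq_top, Ideal.top_pow]⟩
  | @insert a s ha ih =>
    obtain ⟨r, hr⟩ := ih
    obtain ⟨c, hc⟩ := Ideal.exists_pow_inf_eq_pow_smul (I a)
      ((∏ i ∈ s, I i) ^ n • ⊤ : Submodule R N)
    refine ⟨max (n + c) r, ?_⟩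
    have hmono : ∀ i, (I i ^ max (n + c) r • ⊤ : Submodule R N) ≤ I i ^ r • ⊤ := fun i =>
      Submodule.smul_mono_left (Ideal.pow_le_pow_right (le_max_right _ _))
    calc ⨅ i ∈ insert a s, (I i ^ max (n + c) r • ⊤ : Submodule R N)
        ≤ (I a ^ (n + c) • ⊤ : Submodule R N) ⊓ (∏ i ∈ s, I i) ^ n • ⊤ := by
          refine le_inf ((iInf₂_le a (Finset.mem_insert_self a s)).trans
            (Submodule.smul_mono_left (Ideal.pow_le_pow_right (le_max_left _ _)))) ?_
          exact (le_iInf₂ fun i hi => (iInf₂_le i (Finset.mem_insert_of_mem hi)).trans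
            (hmono i)).trans hr
      _ = I a ^ n • (I a ^ c • ⊤ ⊓ (∏ i ∈ s, I i) ^ n • ⊤) := by
          rw [hc (n + c) (Nat.le_add_left c n), Nat.add_sub_cancel]
      _ ≤ I a ^ n • ((∏ i ∈ s, I i) ^ n • ⊤) := Submodule.smul_mono le_rfl inf_le_right
      _ = (∏ i ∈ insert a s, I i) ^ n • ⊤ := by
          rw [Finset.prod_insert ha, mul_pow, mul_smul]

section SymbolicTopology

variable {R : Type*} [CommRing R] {N : Type*} [AddCommGroup N] [Module R N]

lemma symbPow_subset_symbPow {I J : Ideal R} {m n : ℕ}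
    (hass : mAss R (N ⧸ (J • ⊤ : Submodule R N)) ⊆ mAss R (N ⧸ (I • ⊤ : Submodule R N)))
    (hpow : I ^ m ≤ J ^ n) : symbPow R I N m ⊆ symbPow R J N n := by
  rintro x ⟨s, hs, hsx⟩
  exact ⟨s, fun p hp => hs p (hass hp), Submodule.smul_mono_left hpow hsx⟩

lemma symbEquivAdic.of_radical_eq [IsNoetherianRing R] [Module.Finite R N] {I J : Ideal R}
    (h : I.radical = J.radical) (hI : symbEquivAdic R I N) : symbEquivAdic R J N := by
  intro n
  obtain ⟨a, ha⟩ : ∃ a, I ^ a ≤ J :=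
    exists_pow_le_of_le_radical_of_fg (h ▸ le_radical) (IsNoetherian.noetherian I)
  obtain ⟨b, hb⟩ : ∃ b, J ^ b ≤ I :=
    exists_pow_le_of_le_radical_of_fg (h.symm ▸ le_radical) (IsNoetherian.noetherian J)
  obtain ⟨m, hm⟩ := hI (a * n)
  refine ⟨b * m, fun x hx => Submodule.smul_mono_left ?_ (hm ?_)⟩
  · exact pow_mul I a n ▸ pow_right_mono ha n
  · refine symbPow_subset_symbPow (mAss_quotient_eq_of_radical_eq N h).subset ?_ hx
    exact pow_mul J b m ▸ pow_right_mono hb m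

lemma symbEquivAdic_prod [IsNoetherianRing R] [Module.Finite R N] {ι : Type*}
    (I : ι → Ideal R) (s : Finset ι)
    (hass : ∀ i ∈ s, mAss R (N ⧸ (I i • ⊤ : Submodule R N)) ⊆
      mAss R (N ⧸ ((∏ i ∈ s, I i) • ⊤ : Submodule R N)))
    (he : ∀ i ∈ s, symbEquivAdic R (I i) N) : symbEquivAdic R (∏ i ∈ s, I i) N := by
  intro n
  obtain ⟨r, hr⟩ := exists_iInf_pow_smul_top_le_prod_pow_smul_top N I s n
  choose! m hm using fun i hi => he i hi r
  refine ⟨s.sup m, fun x hx => hr <| (Submodule.mem_iInf _).2 fun i =>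
    (Submodule.mem_iInf _).2 fun hi => hm i hi ?_⟩
  refine symbPow_subset_symbPow (hass i hi) ?_ hx
  exact (pow_right_mono (prod_le_inf.trans (Finset.inf_le hi)) _).trans
    (pow_le_pow_right (Finset.le_sup hi))

end SymbolicTopology

theorem stmt5_general (R : Type*) [CommRing R] [IsNoetherianRing R]
    (N : Type*) [AddCommGroup N] [Module R N] [Module.Finite R N]
    (k : ℕ) (I : Fin k → Ideal R)
    (hass : mAss R (N ⧸ ((∏ i, I i) • ⊤ : Submodule R N)) =
      ⋃ i, mAss R (N ⧸ ((I i) • ⊤ : Submodule R N)))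
    (he : ∀ i, symbEquivAdic R (I i) N) :
    symbEquivAdic R (∏ i, I i) N ∧ symbEquivAdic R (⨅ i, I i) N := by
  have hprod : symbEquivAdic R (∏ i, I i) N :=
    symbEquivAdic_prod I Finset.univ (fun i _ => hass ▸ Set.subset_iUnion_of_subset i le_rfl)
      fun i _ => he i
  refine ⟨hprod, hprod.of_radical_eq ?_⟩
  rw [radical_prod_eq_radical_inf, Finset.inf_univ_eq_iInf]

theorem stmt5 (R : Type*) [CommRing R] [IsNoetherianRing R]
    (N : Type*) [AddCommGroup N] [Module R N] [Module.Finite R N] [Nontrivial N]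
    (k : ℕ) (I : Fin k → Ideal R)
    (hprop : ∀ i, ((I i) • ⊤ : Submodule R N) ≠ ⊤)
    (hass : mAss R (N ⧸ ((∏ i, I i) • ⊤ : Submodule R N)) =
      ⋃ i, mAss R (N ⧸ ((I i) • ⊤ : Submodule R N)))
    (he : ∀ i, symbEquivAdic R (I i) N) :
    symbEquivAdic R (∏ i, I i) N ∧ symbEquivAdic R (⨅ i, I i) N :=
  stmt5_general R N k I hass he
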